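/- arXiv:1608.05498 — 9 statements merged into one kernel-verified Lean document; each statement's English description precedes it below -/
import Mathlib

section
/- Let X be an integrable, non-constant real random variable and τ ∈ (0,1). Then there exists a unique real number x = e_τ(X) solving τ·E[(X - x)·1{X > x}] = (1-τ)·E[(x - X)·1{X ≤ x}]. -/
/-!
Write `g x = E[(X - x)⁺]` and `h x = E[(x - X)⁺]`. Both are `1`-Lipschitz, `g` is antitone,
`h` is monotone, and `g x - h x = E[X] - x`. Hence for `x ≤ y` the decreases `g x - g y` and
`h y - h x` are nonnegative and add up to `y - x`, so `F = τ g - (1 - τ) h` drops by at least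
`min τ (1 - τ) * (y - x)`. A continuous function with such a slope bound is a bijection of `ℝ`,
and the expectile is the unique zero of `F`.
-/

open MeasureTheory Filter Function

theorem bijective_of_continuous_of_mul_sub_le {f : ℝ → ℝ} {c : ℝ} (hf : Continuous f)
    (hc : 0 < c) (h : ∀ x y, x ≤ y → c * (y - x) ≤ f x - f y) : Bijective f := by
  have hanti : StrictAnti f := fun x y hxy => by nlinarith [h x y hxy.le]
  refine ⟨hanti.injective, hf.surjective' ?_ ?_⟩
  · refine tendsto_atTop_mono' atBot ?_ (tendsto_atTop_add_const_left atBot (f 0)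
      (tendsto_id.const_mul_atBot_of_neg (neg_neg_of_pos hc)))
    filter_upwards [eventually_le_atBot 0] with x hx
    simp only [id]
    linarith [h x 0 hx]
  · refine tendsto_atBot_mono' atTop ?_ (tendsto_atBot_add_const_left atTop (f 0)
      (tendsto_id.const_mul_atTop_of_neg (neg_neg_of_pos hc)))
    filter_upwards [eventually_ge_atTop 0] with x hx
    simp only [id]
    linarith [h 0 x hx]

theorem sub_mul_ite_lt_eq_max (a x : ℝ) :
    (a - x) * (if x < a then (1 : ℝ) else 0) = max (a - x) 0 := by
  split_ifs with h
  · simp [h.le]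
  · simp [not_lt.1 h]

theorem sub_mul_ite_le_eq_max (a x : ℝ) :
    (x - a) * (if a ≤ x then (1 : ℝ) else 0) = max (x - a) 0 := by
  split_ifs with h
  · simp [h]
  · simp [(not_le.1 h).le]

namespace MeasureTheory

variable {Ω : Type*} [MeasurableSpace Ω]

noncomputable def upperPartialMoment (μ : Measure Ω) (X : Ω → ℝ) (x : ℝ) : ℝ :=
  ∫ ω, max (X ω - x) 0 ∂μ

noncomputable def lowerPartialMoment (μ : Measure Ω) (X : Ω → ℝ) (x : ℝ) : ℝ :=
  ∫ ω, max (x - X ω) 0 ∂μ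

variable {μ : Measure Ω} {X : Ω → ℝ}

theorem Integrable.max_sub_const_zero [IsFiniteMeasure μ] (hX : Integrable X μ) (x : ℝ) :
    Integrable (fun ω => max (X ω - x) 0) μ :=
  (hX.sub (integrable_const x)).pos_part

theorem Integrable.max_const_sub_zero [IsFiniteMeasure μ] (hX : Integrable X μ) (x : ℝ) :
    Integrable (fun ω => max (x - X ω) 0) μ :=
  ((integrable_const x).sub hX).pos_part

theorem antitone_upperPartialMoment [IsFiniteMeasure μ] (hX : Integrable X μ) :
    Antitone (upperPartialMoment μ X) := fun x y hxy =>
  integral_mono (hX.max_sub_const_zero y) (hX.max_sub_const_zero x) fun ω =>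
    max_le_max (by linarith) le_rfl

theorem monotone_lowerPartialMoment [IsFiniteMeasure μ] (hX : Integrable X μ) :
    Monotone (lowerPartialMoment μ X) := fun x y hxy =>
  integral_mono (hX.max_const_sub_zero x) (hX.max_const_sub_zero y) fun ω =>
    max_le_max (by linarith) le_rfl

theorem upperPartialMoment_sub_lowerPartialMoment [IsProbabilityMeasure μ]
    (hX : Integrable X μ) (x : ℝ) :
    upperPartialMoment μ X x - lowerPartialMoment μ X x = ∫ ω, X ω ∂μ - x := by
  have hpoint : ∀ ω, max (X ω - x) 0 - max (x - X ω) 0 = X ω - x := fun ω => by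
    simpa only [neg_sub] using max_zero_sub_max_neg_zero_eq_self (X ω - x)
  rw [upperPartialMoment, lowerPartialMoment,
    ← integral_sub (hX.max_sub_const_zero x) (hX.max_const_sub_zero x)]
  simp only [hpoint]
  rw [integral_sub hX (integrable_const x), integral_const, probReal_univ, one_smul]

theorem lipschitzWith_upperPartialMoment [IsProbabilityMeasure μ] (hX : Integrable X μ) :
    LipschitzWith 1 (upperPartialMoment μ X) := by
  refine LipschitzWith.of_dist_le_mul fun x y => ?_
  rw [NNReal.coe_one, one_mul, dist_eq_norm, dist_eq_norm, upperPartialMoment,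
    upperPartialMoment, ← integral_sub (hX.max_sub_const_zero x) (hX.max_sub_const_zero y)]
  calc ‖∫ ω, (max (X ω - x) 0 - max (X ω - y) 0) ∂μ‖ ≤ ‖x - y‖ * μ.real Set.univ :=
        norm_integral_le_of_norm_le_const <| .of_forall fun ω => by
          simpa only [Real.norm_eq_abs, sub_sub_sub_cancel_left, abs_sub_comm] using
            abs_max_sub_max_le_abs (X ω - x) (X ω - y) 0
    _ = ‖x - y‖ := by rw [probReal_univ, mul_one]

theorem lipschitzWith_lowerPartialMoment [IsProbabilityMeasure μ] (hX : Integrable X μ) :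
    LipschitzWith 1 (lowerPartialMoment μ X) := by
  refine LipschitzWith.of_dist_le_mul fun x y => ?_
  rw [NNReal.coe_one, one_mul, dist_eq_norm, dist_eq_norm, lowerPartialMoment,
    lowerPartialMoment, ← integral_sub (hX.max_const_sub_zero x) (hX.max_const_sub_zero y)]
  calc ‖∫ ω, (max (x - X ω) 0 - max (y - X ω) 0) ∂μ‖ ≤ ‖x - y‖ * μ.real Set.univ :=
        norm_integral_le_of_norm_le_const <| .of_forall fun ω => by
          simpa only [Real.norm_eq_abs, sub_sub_sub_cancel_right] using
            abs_max_sub_max_le_abs (x - X ω) (y - X ω) 0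
    _ = ‖x - y‖ := by rw [probReal_univ, mul_one]

theorem min_mul_sub_le_expectile_gap [IsProbabilityMeasure μ] (hX : Integrable X μ)
    (τ : ℝ) {x y : ℝ} (hxy : x ≤ y) :
    min τ (1 - τ) * (y - x) ≤
      (τ * upperPartialMoment μ X x - (1 - τ) * lowerPartialMoment μ X x) -
        (τ * upperPartialMoment μ X y - (1 - τ) * lowerPartialMoment μ X y) := by
  have hup := antitone_upperPartialMoment hX hxy
  have hlow := monotone_lowerPartialMoment hX hxy
  have hx := upperPartialMoment_sub_lowerPartialMoment hX x
  have hy := upperPartialMoment_sub_lowerPartialMoment hX y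
  have hτ0 : min τ (1 - τ) ≤ τ := min_le_left _ _
  have hτ1 : min τ (1 - τ) ≤ 1 - τ := min_le_right _ _
  nlinarith

end MeasureTheory

theorem expectile_exists_unique_general
    {Ω : Type*} [MeasurableSpace Ω] (μ : Measure Ω) [IsProbabilityMeasure μ]
    (X : Ω → ℝ) (hInt : Integrable X μ)
    (τ : ℝ) (hτ : τ ∈ Set.Ioo (0:ℝ) 1) :
    ∃! x : ℝ,
      τ * ∫ ω, (X ω - x) * (if x < X ω then (1:ℝ) else 0) ∂μ
        = (1 - τ) * ∫ ω, (x - X ω) * (if X ω ≤ x then (1:ℝ) else 0) ∂μ := by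
  set F : ℝ → ℝ := fun x => τ * upperPartialMoment μ X x - (1 - τ) * lowerPartialMoment μ X x
  have hF : Continuous F :=
    (continuous_const.mul (lipschitzWith_upperPartialMoment hInt).continuous).sub
      (continuous_const.mul (lipschitzWith_lowerPartialMoment hInt).continuous)
  have hbij : Bijective F := bijective_of_continuous_of_mul_sub_le hF
    (lt_min hτ.1 (sub_pos.2 hτ.2)) fun _ _ => min_mul_sub_le_expectile_gap hInt τ
  simp only [sub_mul_ite_lt_eq_max, sub_mul_ite_le_eq_max, ← sub_eq_zero (a := τ * _)]
  exact hbij.existsUnique 0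

theorem expectile_exists_unique
    {Ω : Type*} [MeasurableSpace Ω] (μ : Measure Ω) [IsProbabilityMeasure μ]
    (X : Ω → ℝ) (hInt : Integrable X μ)
    (hNC : ¬ ∃ c : ℝ, ∀ᵐ ω ∂μ, X ω = c)
    (τ : ℝ) (hτ : τ ∈ Set.Ioo (0:ℝ) 1) :
    ∃! x : ℝ,
      τ * ∫ ω, (X ω - x) * (if x < X ω then (1:ℝ) else 0) ∂μ
        = (1 - τ) * ∫ ω, (x - X ω) * (if X ω ≤ x then (1:ℝ) else 0) ∂μ :=
  expectile_exists_unique_general μ X hInt τ hτ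
end

section
/- Let X be a square-integrable real random variable and τ ∈ (0,1). Define the scoring function S(r,x) = -1{x > r}·(1-2τ)·(x-r)² + (1-τ)·r·(r - 2x). Then for every real r, E[S(e_τ(X), X)] ≤ E[S(r, X)], with strict inequality whenever r ≠ e_τ(X). -/
/-!
Up to the term `(1 - τ) x²`, which does not depend on `r`, the score `S r x` is the asymmetric
squared loss `L r x = w_r(x) (x - r)²`, with weight `w_r(x) = 1 - τ` for `x ≤ r` and `τ`
otherwise.
For fixed `x`, `r ↦ L r x` is strongly convex with modulus `min τ (1 - τ)` and has derivative
`-2 w_e(x) (x - e)` at `e`; the expectile equation says precisely that this derivative has mean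
zero. Integrating the strong convexity inequality gives
`E S(r, X) ≥ E S(e, X) + min τ (1 - τ) (r - e)²`.
-/

open MeasureTheory

noncomputable section

def expectileWeight (τ r x : ℝ) : ℝ := if x ≤ r then 1 - τ else τ

def expectileLoss (τ r x : ℝ) : ℝ := expectileWeight τ r x * (x - r) ^ 2

end

lemma expectileLoss_sub_mul_sq (τ r x : ℝ) :
    expectileLoss τ r x - (1 - τ) * x ^ 2
      = -(if r < x then (1:ℝ) else 0) * (1 - 2*τ) * (x - r)^2 + (1 - τ) * r * (r - 2*x) := by
  unfold expectileLoss expectileWeight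
  by_cases h : x ≤ r
  · rw [if_pos h, if_neg (not_lt.mpr h)]; ring
  · rw [if_neg h, if_pos (not_le.mp h)]; ring

lemma abs_expectileWeight_le (τ r x : ℝ) : |expectileWeight τ r x| ≤ |τ| + |1 - τ| := by
  unfold expectileWeight
  split_ifs <;> linarith [abs_nonneg τ, abs_nonneg (1 - τ)]

lemma measurable_expectileWeight (τ r : ℝ) : Measurable (expectileWeight τ r) :=
  Measurable.ite measurableSet_Iic measurable_const measurable_const

lemma expectileLoss_ge (τ r e x : ℝ) :
    expectileLoss τ e x - 2 * (r - e) * (expectileWeight τ e x * (x - e))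
      + min τ (1 - τ) * (r - e) ^ 2 ≤ expectileLoss τ r x := by
  have hτ : min τ (1 - τ) ≤ τ := min_le_left _ _
  have hτ' : min τ (1 - τ) ≤ 1 - τ := min_le_right _ _
  have hsq := sq_nonneg (r - e)
  unfold expectileLoss expectileWeight
  -- In the two mixed cases `x` lies between `e` and `r`, so `(x - r)² ≤ (r - e)²` compensates
  -- the change of weight.
  split_ifs with hxr hxe hxe
  · nlinarith
  · have hb : (x - r) ^ 2 ≤ (r - e) ^ 2 := by nlinarith
    rcases le_total 0 (1 - 2 * τ) with h | h
    · nlinarith [mul_nonneg h (sq_nonneg (x - r)), mul_le_mul_of_nonneg_right hτ hsq]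
    · nlinarith [mul_le_mul_of_nonpos_left hb h, mul_le_mul_of_nonneg_right hτ' hsq]
  · have hb : (x - r) ^ 2 ≤ (r - e) ^ 2 := by nlinarith
    rcases le_total 0 (2 * τ - 1) with h | h
    · nlinarith [mul_nonneg h (sq_nonneg (x - r)), mul_le_mul_of_nonneg_right hτ' hsq]
    · nlinarith [mul_le_mul_of_nonpos_left hb h, mul_le_mul_of_nonneg_right hτ hsq]
  · nlinarith

section Integrals

variable {Ω : Type*} [MeasurableSpace Ω] {μ : Measure Ω} {X g : Ω → ℝ}

lemma MeasureTheory.Integrable.expectileWeight_mul (τ r : ℝ) (hX : Measurable X)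
    (hg : Integrable g μ) :
    Integrable (fun ω => expectileWeight τ r (X ω) * g ω) μ :=
  hg.bdd_mul ((measurable_expectileWeight τ r).comp hX).aestronglyMeasurable
    (ae_of_all _ fun ω => (Real.norm_eq_abs _).trans_le (abs_expectileWeight_le τ r (X ω)))

lemma MeasureTheory.Integrable.mul_ite_one_zero {p : Ω → Prop} [DecidablePred p]
    (hg : Integrable g μ) (hp : MeasurableSet {ω | p ω}) :
    Integrable (fun ω => g ω * if p ω then (1 : ℝ) else 0) μ := by
  refine (hg.indicator hp).congr (ae_of_all _ fun ω => ?_)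
  simp [Set.indicator_apply]

lemma integrable_expectileLoss [IsFiniteMeasure μ] (τ r : ℝ) (hX : Measurable X)
    (hX2 : MemLp X 2 μ) :
    Integrable (fun ω => expectileLoss τ r (X ω)) μ :=
  Integrable.expectileWeight_mul τ r hX (hX2.sub (memLp_const r)).integrable_sq

lemma integral_expectileWeight_mul_sub_eq_zero [IsFiniteMeasure μ] {τ e : ℝ} (hX : Measurable X)
    (hXint : Integrable X μ)
    (he : τ * ∫ ω, (X ω - e) * (if e < X ω then (1:ℝ) else 0) ∂μ
        = (1 - τ) * ∫ ω, (e - X ω) * (if X ω ≤ e then (1:ℝ) else 0) ∂μ) :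
    ∫ ω, expectileWeight τ e (X ω) * (X ω - e) ∂μ = 0 := by
  have hsplit : ∀ ω, expectileWeight τ e (X ω) * (X ω - e)
      = τ * ((X ω - e) * (if e < X ω then (1:ℝ) else 0))
        - (1 - τ) * ((e - X ω) * (if X ω ≤ e then (1:ℝ) else 0)) := by
    intro ω
    unfold expectileWeight
    by_cases h : X ω ≤ e
    · rw [if_pos h, if_pos h, if_neg (not_lt.mpr h)]; ring
    · rw [if_neg h, if_neg h, if_pos (not_le.mp h)]; ring
  have hpos : Integrable (fun ω => (X ω - e) * if e < X ω then (1:ℝ) else 0) μ :=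
    (hXint.sub (integrable_const e)).mul_ite_one_zero (measurableSet_lt measurable_const hX)
  have hneg : Integrable (fun ω => (e - X ω) * if X ω ≤ e then (1:ℝ) else 0) μ :=
    ((integrable_const e).sub hXint).mul_ite_one_zero (measurableSet_le hX measurable_const)
  rw [integral_congr_ae (ae_of_all _ hsplit),
    integral_sub (hpos.const_mul τ) (hneg.const_mul (1 - τ)), integral_const_mul,
    integral_const_mul, he, sub_self]

lemma integral_expectileLoss_add_le [IsProbabilityMeasure μ] {τ e : ℝ} (hX : Measurable X)
    (hX2 : MemLp X 2 μ)
    (he : ∫ ω, expectileWeight τ e (X ω) * (X ω - e) ∂μ = 0) (r : ℝ) :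
    ∫ ω, expectileLoss τ e (X ω) ∂μ + min τ (1 - τ) * (r - e) ^ 2
      ≤ ∫ ω, expectileLoss τ r (X ω) ∂μ := by
  have hident : Integrable (fun ω => expectileWeight τ e (X ω) * (X ω - e)) μ :=
    ((hX2.sub (memLp_const e)).integrable one_le_two).expectileWeight_mul τ e hX
  have hle := integrable_expectileLoss τ e hX hX2
  have hlin : Integrable (fun ω => expectileLoss τ e (X ω)
      - 2 * (r - e) * (expectileWeight τ e (X ω) * (X ω - e))) μ :=
    hle.sub (hident.const_mul _)
  calc ∫ ω, expectileLoss τ e (X ω) ∂μ + min τ (1 - τ) * (r - e) ^ 2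
      = ∫ ω, (expectileLoss τ e (X ω)
          - 2 * (r - e) * (expectileWeight τ e (X ω) * (X ω - e))
          + min τ (1 - τ) * (r - e) ^ 2) ∂μ := by
        rw [integral_add hlin (integrable_const _), integral_sub hle (hident.const_mul _),
          integral_const_mul, he, integral_const]
        simp
    _ ≤ ∫ ω, expectileLoss τ r (X ω) ∂μ :=
        integral_mono (hlin.add (integrable_const _)) (integrable_expectileLoss τ r hX hX2)
          fun ω => expectileLoss_ge τ r e (X ω)

end Integrals

theorem expectile_quadratic_score_strictly_consistent
    {Ω : Type*} [MeasurableSpace Ω] (μ : Measure Ω) [IsProbabilityMeasure μ]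
    (X : Ω → ℝ) (hX : Measurable X)
    (hL2 : Integrable (fun ω => (X ω) ^ 2) μ)
    (τ : ℝ) (hτ : τ ∈ Set.Ioo (0:ℝ) 1)
    (e : ℝ)
    (he : τ * ∫ ω, (X ω - e) * (if e < X ω then (1:ℝ) else 0) ∂μ
        = (1 - τ) * ∫ ω, (e - X ω) * (if X ω ≤ e then (1:ℝ) else 0) ∂μ)
    (S : ℝ → ℝ → ℝ)
    (hS : ∀ r x, S r x = -(if r < x then (1:ℝ) else 0) * (1 - 2*τ) * (x - r)^2
        + (1 - τ) * r * (r - 2*x)) :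
    ∀ r : ℝ, (∫ ω, S e (X ω) ∂μ) ≤ (∫ ω, S r (X ω) ∂μ)
      ∧ (r ≠ e → (∫ ω, S e (X ω) ∂μ) < (∫ ω, S r (X ω) ∂μ)) := by
  have hX2 : MemLp X 2 μ := (memLp_two_iff_integrable_sq hX.aestronglyMeasurable).2 hL2
  have hS_integral : ∀ r, ∫ ω, S r (X ω) ∂μ
      = ∫ ω, expectileLoss τ r (X ω) ∂μ - (1 - τ) * ∫ ω, X ω ^ 2 ∂μ := fun r => by
    simp_rw [hS, ← expectileLoss_sub_mul_sq]
    rw [integral_sub (integrable_expectileLoss τ r hX hX2) (hL2.const_mul _), integral_const_mul]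
  have he' := integral_expectileWeight_mul_sub_eq_zero hX (hX2.integrable one_le_two) he
  have hmin : 0 < min τ (1 - τ) := lt_min hτ.1 (sub_pos.2 hτ.2)
  intro r
  have key := integral_expectileLoss_add_le hX hX2 he' r
  rw [hS_integral, hS_integral]
  refine ⟨by linarith [mul_nonneg hmin.le (sq_nonneg (r - e))], fun hr => ?_⟩
  linarith [mul_pos hmin (pow_two_pos_of_ne_zero (sub_ne_zero.2 hr))]
end

section
/- Let X be an integrable real random variable with continuous and strictly increasing distribution function F, let α ∈ (0,1), and set q = F⁻¹(α). Define the pinball scoring function S(r,x) = (1 - α - 1{x > r})·r + 1{x > r}·x. Then E[S(q, X)] < E[S(r, X)] for all r ≠ q. -/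
open MeasureTheory Set

/-!
Write the score as `S r x = (1 - α) r + (x - r)⁺`. For `a ≤ b`, the increment
`(x - a)⁺ - (x - b)⁺` lies between `(b - a) 1{x > b}` and `(b - a) 1{x > a}`, so the expected
score `E(r)` satisfies `(b - a)(F a - α) ≤ E(b) - E(a) ≤ (b - a)(F b - α)`. Split `E(r) - E(q)`
at the midpoint `m` of `q` and `r`: the half adjacent to `q` is bounded by `(m - q)(F q - α) = 0`,
the other half by `(r - m)(F m - α)`, whose sign is fixed strictly by the monotonicity of `F`.
-/

def pinballLoss (α r x : ℝ) : ℝ := (1 - α) * r + max (x - r) 0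

theorem pinball_score_eq_pinballLoss (α r x : ℝ) :
    (1 - α - (if r < x then (1:ℝ) else 0)) * r + (if r < x then (1:ℝ) else 0) * x
      = pinballLoss α r x := by
  unfold pinballLoss
  split_ifs
  · rw [max_eq_left (by linarith)]; ring
  · rw [max_eq_right (by linarith)]; ring

theorem continuous_pinballLoss (α r : ℝ) : Continuous (pinballLoss α r) := by
  unfold pinballLoss; fun_prop

section PositivePartIncrement

variable {a b : ℝ}

theorem indicator_Ioi_le_max_sub_sub_max (hab : a ≤ b) (x : ℝ) :
    (Ioi b).indicator (fun _ => b - a) x ≤ max (x - a) 0 - max (x - b) 0 := by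
  simp only [indicator, mem_Ioi, max_def]
  split_ifs <;> linarith

theorem max_sub_sub_max_le_indicator_Ioi (hab : a ≤ b) (x : ℝ) :
    max (x - a) 0 - max (x - b) 0 ≤ (Ioi a).indicator (fun _ => b - a) x := by
  simp only [indicator, mem_Ioi, max_def]
  split_ifs <;> linarith

variable {ν : Measure ℝ} [IsFiniteMeasure ν]

theorem integrable_max_sub_sub_max (a b : ℝ) :
    Integrable (fun x => max (x - a) 0 - max (x - b) 0) ν := by
  refine Integrable.of_bound (by fun_prop) |b - a| (Filter.Eventually.of_forall fun x => ?_)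
  calc ‖max (x - a) 0 - max (x - b) 0‖ ≤ |(x - a) - (x - b)| := abs_max_sub_max_le_abs _ _ _
    _ = |b - a| := by ring_nf

theorem mul_measureReal_Ioi_le_integral_max_sub_sub_max (hab : a ≤ b) :
    (b - a) * ν.real (Ioi b) ≤ ∫ x, (max (x - a) 0 - max (x - b) 0) ∂ν := by
  rw [mul_comm, ← smul_eq_mul, ← integral_indicator_const _ measurableSet_Ioi]
  exact integral_mono ((integrable_const _).indicator measurableSet_Ioi)
    (integrable_max_sub_sub_max a b) (indicator_Ioi_le_max_sub_sub_max hab)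

theorem integral_max_sub_sub_max_le_mul_measureReal_Ioi (hab : a ≤ b) :
    ∫ x, (max (x - a) 0 - max (x - b) 0) ∂ν ≤ (b - a) * ν.real (Ioi a) := by
  rw [mul_comm, ← smul_eq_mul, ← integral_indicator_const _ measurableSet_Ioi]
  exact integral_mono (integrable_max_sub_sub_max a b)
    ((integrable_const _).indicator measurableSet_Ioi) (max_sub_sub_max_le_indicator_Ioi hab)

end PositivePartIncrement

section ExpectedPinballLoss

variable {ν : Measure ℝ} [IsProbabilityMeasure ν]

theorem measureReal_Ioi_eq_one_sub (t : ℝ) : ν.real (Ioi t) = 1 - ν.real (Iic t) := by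
  rw [← compl_Iic, probReal_compl_eq_one_sub measurableSet_Iic]

variable (hν : Integrable id ν) (α : ℝ) {a b : ℝ}
include hν

theorem integrable_pinballLoss (r : ℝ) : Integrable (pinballLoss α r) ν :=
  (integrable_const _).add ((hν.sub (integrable_const r)).pos_part)

theorem integral_pinballLoss_sub_integral_pinballLoss (a b : ℝ) :
    ∫ x, pinballLoss α b x ∂ν - ∫ x, pinballLoss α a x ∂ν
      = (1 - α) * (b - a) - ∫ x, (max (x - a) 0 - max (x - b) 0) ∂ν := by
  calc _ = ∫ x, ((1 - α) * (b - a) - (max (x - a) 0 - max (x - b) 0)) ∂ν := by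
        rw [← integral_sub (integrable_pinballLoss hν α b) (integrable_pinballLoss hν α a)]
        congr 1 with x
        unfold pinballLoss
        ring
    _ = _ := by
        rw [integral_sub (integrable_const _) (integrable_max_sub_sub_max a b), integral_const,
          probReal_univ, smul_eq_mul, one_mul]

theorem mul_sub_le_integral_pinballLoss_sub (hab : a ≤ b) :
    (b - a) * (ν.real (Iic a) - α)
      ≤ ∫ x, pinballLoss α b x ∂ν - ∫ x, pinballLoss α a x ∂ν := by
  have h_tail := integral_max_sub_sub_max_le_mul_measureReal_Ioi (ν := ν) hab
  rw [measureReal_Ioi_eq_one_sub] at h_tail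
  rw [integral_pinballLoss_sub_integral_pinballLoss hν]
  linarith

theorem integral_pinballLoss_sub_le_mul_sub (hab : a ≤ b) :
    ∫ x, pinballLoss α b x ∂ν - ∫ x, pinballLoss α a x ∂ν
      ≤ (b - a) * (ν.real (Iic b) - α) := by
  have h_tail := mul_measureReal_Ioi_le_integral_max_sub_sub_max (ν := ν) hab
  rw [measureReal_Ioi_eq_one_sub] at h_tail
  rw [integral_pinballLoss_sub_integral_pinballLoss hν]
  linarith

theorem integral_pinballLoss_lt_of_strictMono {q r : ℝ}
    (hF : StrictMono fun t => ν.real (Iic t)) (hq : ν.real (Iic q) = α) (hr : r ≠ q) :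
    ∫ x, pinballLoss α q x ∂ν < ∫ x, pinballLoss α r x ∂ν := by
  rcases hr.lt_or_gt with hrq | hqr
  · have hrm : r < (r + q) / 2 := by linarith
    have hmq : (r + q) / 2 < q := by linarith
    have hFm : ν.real (Iic ((r + q) / 2)) < α := hq ▸ hF hmq
    have h_near := integral_pinballLoss_sub_le_mul_sub hν α hmq.le
    have h_far := integral_pinballLoss_sub_le_mul_sub hν α hrm.le
    rw [hq, sub_self, mul_zero] at h_near
    linarith [mul_neg_of_pos_of_neg (sub_pos.2 hrm) (sub_neg.2 hFm)]
  · have hqm : q < (q + r) / 2 := by linarith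
    have hmr : (q + r) / 2 < r := by linarith
    have hFm : α < ν.real (Iic ((q + r) / 2)) := hq ▸ hF hqm
    have h_near := mul_sub_le_integral_pinballLoss_sub hν α hqm.le
    have h_far := mul_sub_le_integral_pinballLoss_sub hν α hmr.le
    rw [hq, sub_self, mul_zero] at h_near
    linarith [mul_pos (sub_pos.2 hmr) (sub_pos.2 hFm)]

end ExpectedPinballLoss

theorem pinball_strictly_consistent_for_quantile_general
    {Ω : Type*} [MeasurableSpace Ω] (μ : Measure Ω) [IsProbabilityMeasure μ]
    (X : Ω → ℝ) (hInt : Integrable X μ)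
    (F : ℝ → ℝ) (hF : ∀ x, F x = (μ {ω | X ω ≤ x}).toReal)
    (hFmono : StrictMono F)
    (α : ℝ)
    (q : ℝ) (hq : F q = α)
    (S : ℝ → ℝ → ℝ)
    (hS : ∀ r x, S r x = (1 - α - (if r < x then (1:ℝ) else 0)) * r
        + (if r < x then (1:ℝ) else 0) * x) :
    ∀ r : ℝ, r ≠ q → (∫ ω, S q (X ω) ∂μ) < (∫ ω, S r (X ω) ∂μ) := by
  intro r hr
  have hXm : AEMeasurable X μ := hInt.aemeasurable
  set ν := μ.map X
  have : IsProbabilityMeasure ν := Measure.isProbabilityMeasure_map hXm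
  have hF_eq : F = fun t => ν.real (Iic t) := by
    funext t
    rw [hF, map_measureReal_apply_of_aemeasurable hXm measurableSet_Iic]
    rfl
  have hS_eq : S = pinballLoss α := by
    funext r x
    rw [hS, pinball_score_eq_pinballLoss]
  have hν : Integrable id ν := (integrable_map_measure aestronglyMeasurable_id hXm).mpr hInt
  have h_law (r : ℝ) : ∫ ω, S r (X ω) ∂μ = ∫ x, pinballLoss α r x ∂ν := by
    rw [hS_eq, integral_map hXm (continuous_pinballLoss α r).aestronglyMeasurable]
  rw [h_law, h_law]
  exact integral_pinballLoss_lt_of_strictMono hν α (hF_eq ▸ hFmono) (by rwa [hF_eq] at hq) hr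

theorem pinball_strictly_consistent_for_quantile
    {Ω : Type*} [MeasurableSpace Ω] (μ : Measure Ω) [IsProbabilityMeasure μ]
    (X : Ω → ℝ) (hX : Measurable X) (hInt : Integrable X μ)
    (F : ℝ → ℝ) (hF : ∀ x, F x = (μ {ω | X ω ≤ x}).toReal)
    (hFcont : Continuous F) (hFmono : StrictMono F)
    (α : ℝ) (hα : α ∈ Set.Ioo (0:ℝ) 1)
    (q : ℝ) (hq : F q = α)
    (S : ℝ → ℝ → ℝ)
    (hS : ∀ r x, S r x = (1 - α - (if r < x then (1:ℝ) else 0)) * r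
        + (if r < x then (1:ℝ) else 0) * x) :
    ∀ r : ℝ, r ≠ q → (∫ ω, S q (X ω) ∂μ) < (∫ ω, S r (X ω) ∂μ) :=
  pinball_strictly_consistent_for_quantile_general μ X hInt F hF hFmono α q hq S hS
end

section
/- Let α ∈ (0,1), b > 0, and suppose G: ℝ → ℝ is strictly increasing. Define S(r,x) = (1 - α - 1{x > r})·G(r) + 1{x > r}·G(x). If S(c·r, c·x) = c^b · S(r,x) for all c > 0 and all r, x ∈ ℝ, then there exist constants c₀ > 0 and c₀' > 0 such that G(x) = c₀·x^b for x ≥ 0 and G(x) = -c₀'·|x|^b for x < 0. -/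
/-!
On the diagonal `x = r` the indicator vanishes and `S r r = (1 - α) G r`, so homogeneity of `S`
makes `G` itself positively homogeneous of degree `b`. Such a function vanishes at `0` and is
determined by its values at `1` and `-1`; strict monotonicity makes `G 1 > 0 > G (-1)`.
-/

def PosHomogeneousOfDegree (b : ℝ) (f : ℝ → ℝ) : Prop :=
  ∀ c > (0 : ℝ), ∀ r, f (c * r) = c ^ b * f r

namespace PosHomogeneousOfDegree

variable {b : ℝ} {f : ℝ → ℝ}

theorem map_zero (hf : PosHomogeneousOfDegree b f) (hb : b ≠ 0) : f 0 = 0 := by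
  have h2 : (2 : ℝ) ^ b ≠ 1 := by
    rw [← Real.rpow_zero 2, Ne, Real.rpow_right_inj two_pos (by norm_num)]
    exact hb
  have hf2 : f 0 = 2 ^ b * f 0 := by simpa using hf 2 two_pos 0
  have : ((2 : ℝ) ^ b - 1) * f 0 = 0 := by linear_combination -hf2
  exact (mul_eq_zero.mp this).resolve_left (sub_ne_zero.mpr h2)

theorem eq_ite (hf : PosHomogeneousOfDegree b f) (hb : b ≠ 0) (x : ℝ) :
    f x = if 0 ≤ x then f 1 * x ^ b else f (-1) * |x| ^ b := by
  rcases lt_trichotomy x 0 with hx | rfl | hx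
  · rw [if_neg hx.not_ge, abs_of_neg hx, mul_comm, ← hf (-x) (neg_pos.mpr hx), mul_neg_one, neg_neg]
  · rw [if_pos le_rfl, Real.zero_rpow hb, mul_zero, hf.map_zero hb]
  · rw [if_pos hx.le, mul_comm, ← hf x hx, mul_one]

end PosHomogeneousOfDegree

theorem posHomogeneousOfDegree_of_diag {α b : ℝ} (hα : α ≠ 1) {G : ℝ → ℝ} {S : ℝ → ℝ → ℝ}
    (hdiag : ∀ r, S r r = (1 - α) * G r)
    (hhom : ∀ c > (0 : ℝ), ∀ r x : ℝ, S (c * r) (c * x) = c ^ b * S r x) :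
    PosHomogeneousOfDegree b G := by
  intro c hc r
  have h := hhom c hc r r
  rw [hdiag, hdiag, mul_left_comm] at h
  exact mul_left_cancel₀ (sub_ne_zero.mpr hα.symm) h

theorem var_score_positively_homogeneous_characterization
    (α b : ℝ) (hα : α ∈ Set.Ioo (0:ℝ) 1) (hb : 0 < b)
    (G : ℝ → ℝ) (hG : StrictMono G)
    (S : ℝ → ℝ → ℝ)
    (hS : ∀ r x, S r x = (1 - α - (if r < x then (1:ℝ) else 0)) * G r
        + (if r < x then (1:ℝ) else 0) * G x)
    (hhom : ∀ c > (0:ℝ), ∀ r x : ℝ, S (c * r) (c * x) = c ^ b * S r x) :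
    ∃ c₀ > (0:ℝ), ∃ c₀' > (0:ℝ), ∀ x : ℝ,
      G x = if 0 ≤ x then c₀ * x ^ b else -c₀' * |x| ^ b := by
  have hdiag : ∀ r, S r r = (1 - α) * G r := fun r => by simp [hS]
  have hGhom := posHomogeneousOfDegree_of_diag hα.2.ne hdiag hhom
  have hG0 : G 0 = 0 := hGhom.map_zero hb.ne'
  have hG1 : 0 < G 1 := hG0 ▸ hG one_pos
  have hGm1 : 0 < -G (-1) := neg_pos.mpr (hG0 ▸ hG (neg_lt_zero.mpr one_pos))
  refine ⟨G 1, hG1, -G (-1), hGm1, fun x => ?_⟩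
  rw [neg_neg]
  exact hGhom.eq_ite hb.ne' x
end

section
/- Let α ∈ (0,1) and let G: ℝ → ℝ be a function. Define S(r,x) = (1 - α - 1{x > r})·G(r) + 1{x > r}·G(x). If S(c·r, c·x) = S(r,x) for all c > 0 and all r, x ∈ ℝ (i.e., S is positively homogeneous of degree 0), then G is constant on (0,∞); in particular G is not strictly increasing on (0,∞) and hence S is not strictly consistent for VaR_α. -/
/-! On the diagonal the score reduces to `S r r = (1 - α) G r`, and homogeneity of degree 0
gives `S c c = S 1 1` for every `c > 0`. Since `α < 1`, `G c = G 1` for all `c > 0`, and a function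
that is constant on `(0, ∞)` cannot be strictly increasing there. -/

lemma score_diag {α : ℝ} {G : ℝ → ℝ} {S : ℝ → ℝ → ℝ}
    (hS : ∀ r x, S r x = (1 - α - (if r < x then (1:ℝ) else 0)) * G r
        + (if r < x then (1:ℝ) else 0) * G x) (r : ℝ) :
    S r r = (1 - α) * G r := by
  simp [hS]

lemma eq_of_score_homogeneous {α : ℝ} (hα : α < 1) {G : ℝ → ℝ} {S : ℝ → ℝ → ℝ}
    (hS : ∀ r x, S r x = (1 - α - (if r < x then (1:ℝ) else 0)) * G r
        + (if r < x then (1:ℝ) else 0) * G x)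
    (hhom : ∀ c > (0:ℝ), ∀ r x : ℝ, S (c * r) (c * x) = S r x) {c : ℝ} (hc : 0 < c) :
    G c = G 1 := by
  have h : (1 - α) * G c = (1 - α) * G 1 := by
    simpa [score_diag hS] using hhom c hc 1 1
  exact mul_left_cancel₀ (sub_ne_zero.mpr hα.ne') h

lemma not_strictMonoOn_Ioi_of_eq {G : ℝ → ℝ} (hG : ∀ x > (0:ℝ), ∀ y > (0:ℝ), G x = G y) :
    ¬ StrictMonoOn G (Set.Ioi 0) := fun hmono =>
  one_lt_two.ne (hmono.injOn (Set.mem_Ioi.mpr one_pos) (Set.mem_Ioi.mpr two_pos)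
    (hG 1 one_pos 2 two_pos))

theorem var_score_no_zero_homogeneous
    (α : ℝ) (hα : α ∈ Set.Ioo (0:ℝ) 1)
    (G : ℝ → ℝ)
    (S : ℝ → ℝ → ℝ)
    (hS : ∀ r x, S r x = (1 - α - (if r < x then (1:ℝ) else 0)) * G r
        + (if r < x then (1:ℝ) else 0) * G x)
    (hhom : ∀ c > (0:ℝ), ∀ r x : ℝ, S (c * r) (c * x) = S r x) :
    (∀ x > (0:ℝ), ∀ y > (0:ℝ), G x = G y) ∧ ¬ StrictMonoOn G (Set.Ioi 0) := by
  have hconst : ∀ x > (0:ℝ), ∀ y > (0:ℝ), G x = G y := fun x hx y hy => by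
    rw [eq_of_score_homogeneous hα.2 hS hhom hx, eq_of_score_homogeneous hα.2 hS hhom hy]
  exact ⟨hconst, not_strictMonoOn_Ioi_of_eq hconst⟩
end

section
/- Let α ∈ (0,1) and let G: (0,∞) → ℝ be strictly increasing. Define S(r,x) = (1 - α - 1{x > r})·G(r) + 1{x > r}·G(x) for r, x > 0. If the score difference satisfies S(c·r, c·x) - S(c·r', c·x) = S(r,x) - S(r',x) for all r, r', c ∈ (0,∞) and x > 0, then there exist constants c₀ ∈ ℝ and c₁ > 0 such that G(r) = c₀ + c₁·log r for all r > 0. -/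
/-!
Taking the observation `x` below every forecast switches the indicator off, so the score reduces
to `(1 - α) G r` and homogeneity of the differences becomes `G (c r) = G c + G r - G 1`. Hence
`t ↦ G (exp t) - G 1` is additive and strictly increasing, and a monotone additive function on `ℝ`
is linear, being pinned down on the dense set `ℚ`.
-/

open Real Set

lemma eq_mul_of_additive_of_monotone {f : ℝ → ℝ} (hadd : ∀ x y, f (x + y) = f x + f y)
    (hmono : Monotone f) (t : ℝ) : f t = f 1 * t := by
  have hrat : ∀ q : ℚ, f q = f 1 * q := fun q => by
    simpa [smul_eq_mul, Rat.smul_def, mul_comm] using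
      map_ratCast_smul (AddMonoidHom.mk' f hadd) ℚ ℚ q 1
  have hf0 : f 0 = 0 := by simpa using hrat 0
  have hf1 : 0 ≤ f 1 := hf0 ▸ hmono zero_le_one
  rcases hf1.eq_or_lt with hf1 | hf1
  · rw [← hf1, zero_mul]
    refine le_antisymm ?_ ?_
    · simpa [← hf1] using hmono (Int.le_ceil t) |>.trans_eq (hrat ⌈t⌉)
    · simpa [← hf1] using (hrat ⌊t⌋).symm.trans_le (hmono (Int.floor_le t))
  · rw [mul_comm, ← div_eq_iff hf1.ne']
    refine le_antisymm (le_of_forall_lt_rat_imp_le fun q hq => ?_)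
      (le_of_forall_rat_lt_imp_le fun q hq => ?_)
    · rw [div_le_iff₀' hf1, ← hrat]; exact hmono hq.le
    · rw [le_div_iff₀' hf1, ← hrat]; exact hmono hq.le

lemma exists_eq_add_mul_log_of_map_mul {G : ℝ → ℝ} (hG : StrictMonoOn G (Ioi 0))
    (hmul : ∀ r > 0, ∀ s > 0, G (r * s) = G r + G s - G 1) :
    ∃ c₀ : ℝ, ∃ c₁ > (0:ℝ), ∀ r > (0:ℝ), G r = c₀ + c₁ * log r := by
  set f : ℝ → ℝ := fun t => G (exp t) - G 1
  have hadd : ∀ s t, f (s + t) = f s + f t := fun s t => by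
    simp only [f, exp_add, hmul _ (exp_pos s) _ (exp_pos t)]; ring
  have hmono : StrictMono f := fun s t hst =>
    sub_lt_sub_right (hG (exp_pos s) (exp_pos t) (exp_lt_exp.2 hst)) _
  have hf1 : 0 < f 1 := by simpa [f] using hmono zero_lt_one
  refine ⟨G 1, f 1, hf1, fun r hr => ?_⟩
  have := eq_mul_of_additive_of_monotone hadd hmono.monotone (log r)
  simp only [f, exp_log hr] at this
  linarith

lemma map_mul_of_score_sub_homogeneous {α : ℝ} (hα : α ≠ 1) {G : ℝ → ℝ} {S : ℝ → ℝ → ℝ}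
    (hS : ∀ r > (0:ℝ), ∀ x > (0:ℝ), S r x = (1 - α - (if r < x then (1:ℝ) else 0)) * G r
        + (if r < x then (1:ℝ) else 0) * G x)
    (hhom : ∀ c > (0:ℝ), ∀ r > (0:ℝ), ∀ r' > (0:ℝ), ∀ x > (0:ℝ),
      S (c * r) (c * x) - S (c * r') (c * x) = S r x - S r' x)
    {c : ℝ} (hc : 0 < c) {r : ℝ} (hr : 0 < r) : G (c * r) = G c + G r - G 1 := by
  have hlow : ∀ r > 0, ∀ x > 0, x ≤ r → S r x = (1 - α) * G r := fun r hr x hx hxr => by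
    rw [hS r hr x hx, if_neg hxr.not_gt]; ring
  set x := min r 1
  have hx : 0 < x := lt_min hr one_pos
  have h := hhom c hc r hr 1 one_pos x hx
  rw [hlow _ (mul_pos hc hr) _ (mul_pos hc hx) (by gcongr; exact min_le_left _ _),
    hlow _ (by simpa using hc) _ (mul_pos hc hx) (by gcongr; exact min_le_right _ _),
    hlow _ hr _ hx (min_le_left _ _), hlow _ one_pos _ hx (min_le_right _ _), mul_one,
    ← mul_sub, ← mul_sub] at h
  have := mul_left_cancel₀ (sub_ne_zero.2 (Ne.symm hα)) h
  linarith

theorem var_score_zero_homogeneous_differences_characterization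
    (α : ℝ) (hα : α ∈ Set.Ioo (0:ℝ) 1)
    (G : ℝ → ℝ) (hG : StrictMonoOn G (Set.Ioi 0))
    (S : ℝ → ℝ → ℝ)
    (hS : ∀ r > (0:ℝ), ∀ x > (0:ℝ), S r x = (1 - α - (if r < x then (1:ℝ) else 0)) * G r
        + (if r < x then (1:ℝ) else 0) * G x)
    (hhom : ∀ c > (0:ℝ), ∀ r > (0:ℝ), ∀ r' > (0:ℝ), ∀ x > (0:ℝ),
      S (c * r) (c * x) - S (c * r') (c * x) = S r x - S r' x) :
    ∃ c₀ : ℝ, ∃ c₁ > (0:ℝ), ∀ r > (0:ℝ), G r = c₀ + c₁ * Real.log r :=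
  exists_eq_add_mul_log_of_map_mul hG fun _ hc _ hr =>
    map_mul_of_score_sub_homogeneous hα.2.ne hS hhom hc hr
end

section
/- Let φ: (0,∞) → ℝ be twice differentiable with φ'' > 0 (strictly convex), b ∈ ℝ, and suppose φ(c) - c·φ'(c) = c^b·(φ(1) - φ'(1)) for all c > 0. Then φ''(c) = -(φ(1) - φ'(1))·b·c^{b-2} for all c > 0; consequently, if b = 0 or φ(1) = φ'(1), then φ'' ≡ 0, contradicting strict convexity. -/
/-! Differentiating `φ c - c φ'(c) = A c^b` gives `-c φ''(c) = A b c^(b-1)`, i.e.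
`φ''(c) = -A b c^(b-2)`. At `c = 1` this reads `φ''(1) = -A b`, which vanishes when `b = 0` or
`A = φ(1) - φ'(1) = 0`, against `φ'' > 0`. -/

lemma HasDerivAt.sub_mul_deriv {φ φ' : ℝ → ℝ} {x d : ℝ} (h1 : HasDerivAt φ (φ' x) x)
    (h2 : HasDerivAt φ' d x) : HasDerivAt (fun y => φ y - y * φ' y) (-(x * d)) x := by
  have h := h1.sub ((hasDerivAt_id' x).mul h2)
  rwa [one_mul, sub_add_cancel_left] at h

lemma second_deriv_eq_of_sub_mul_deriv_eq_rpow {φ φ' φ'' : ℝ → ℝ} {A b : ℝ}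
    (hd1 : ∀ x > (0:ℝ), HasDerivAt φ (φ' x) x) (hd2 : ∀ x > (0:ℝ), HasDerivAt φ' (φ'' x) x)
    (heq : ∀ c > (0:ℝ), φ c - c * φ' c = c ^ b * A) {c : ℝ} (hc : 0 < c) :
    φ'' c = -A * b * c ^ (b - 2) := by
  have hrhs : HasDerivAt (fun x : ℝ => x ^ b * A) (b * c ^ (b - 1) * A) c :=
    (Real.hasDerivAt_rpow_const (Or.inl hc.ne')).mul_const A
  have hev : (fun x : ℝ => x ^ b * A) =ᶠ[nhds c] fun x => φ x - x * φ' x := by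
    filter_upwards [eventually_gt_nhds hc] with x hx using (heq x hx).symm
  have hderiv : -(c * φ'' c) = b * c ^ (b - 1) * A :=
    ((hd1 c hc).sub_mul_deriv (hd2 c hc)).unique (hrhs.congr_of_eventuallyEq hev.symm)
  have hpow : c ^ (b - 1) = c ^ (b - 2) * c := by
    rw [← Real.rpow_add_one hc.ne']
    ring_nf
  rw [hpow] at hderiv
  exact mul_right_cancel₀ hc.ne' (show φ'' c * c = (-A * b * c ^ (b - 2)) * c by linarith)

theorem expectile_homogeneity_functional_equation
    (φ φ' φ'' : ℝ → ℝ)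
    (hd1 : ∀ x > (0:ℝ), HasDerivAt φ (φ' x) x)
    (hd2 : ∀ x > (0:ℝ), HasDerivAt φ' (φ'' x) x)
    (hconv : ∀ x > (0:ℝ), 0 < φ'' x)
    (b : ℝ)
    (heq : ∀ c > (0:ℝ), φ c - c * φ' c = c ^ b * (φ 1 - φ' 1)) :
    (∀ c > (0:ℝ), φ'' c = -(φ 1 - φ' 1) * b * c ^ (b - 2)) ∧
      ((b = 0 ∨ φ 1 = φ' 1) → False) := by
  have hφ'' : ∀ c > (0:ℝ), φ'' c = -(φ 1 - φ' 1) * b * c ^ (b - 2) := fun c hc =>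
    second_deriv_eq_of_sub_mul_deriv_eq_rpow hd1 hd2 heq hc
  refine ⟨hφ'', fun hdeg => ?_⟩
  have hone : φ'' 1 = -(φ 1 - φ' 1) * b := by simpa using hφ'' 1 one_pos
  have hpos := hconv 1 one_pos
  rcases hdeg with hb | hA
  · rw [hb, mul_zero] at hone
    linarith
  · rw [hA, sub_self, neg_zero, zero_mul] at hone
    linarith
end

section
/- Let τ ∈ (0,1) and define S(r,x) = 1{x > r}·(1-2τ)·(log(x/r) + 1 - x/r) + (1-τ)·(log r - 1 + x/r) for r, x > 0. Then the score difference is positively homogeneous of degree 0: S(c·r, c·x) - S(c·r', c·x) = S(r,x) - S(r',x) for all r, r', x, c > 0. -/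
/-!
The score depends on `(r, x)` only through the ratio `x / r`, apart from the summand
`(1 - τ) * log r`. Rescaling both arguments by `c` leaves the ratio unchanged and shifts
`log r` by `log c`, a constant that cancels in the difference of two scores for the same
observation.
-/

open Real

lemma sub_eq_of_ratio_add_mul_log {S : ℝ → ℝ → ℝ} (g : ℝ → ℝ) (a : ℝ)
    (hS : ∀ r > (0:ℝ), ∀ x > (0:ℝ), S r x = g (x / r) + a * log r)
    {c r r' x : ℝ} (hc : 0 < c) (hr : 0 < r) (hr' : 0 < r') (hx : 0 < x) :
    S (c * r) (c * x) - S (c * r') (c * x) = S r x - S r' x := by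
  rw [hS _ (mul_pos hc hr) _ (mul_pos hc hx), hS _ (mul_pos hc hr') _ (mul_pos hc hx),
    hS r hr x hx, hS r' hr' x hx, mul_div_mul_left _ _ hc.ne',
    mul_div_mul_left _ _ hc.ne', log_mul hc.ne' hr.ne', log_mul hc.ne' hr'.ne']
  ring

theorem expectile_log_score_zero_homogeneous_differences_general
    (τ : ℝ)
    (S : ℝ → ℝ → ℝ)
    (hS : ∀ r > (0:ℝ), ∀ x > (0:ℝ),
      S r x = (if r < x then (1:ℝ) else 0) * (1 - 2*τ) * (Real.log (x / r) + 1 - x / r)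
        + (1 - τ) * (Real.log r - 1 + x / r)) :
    ∀ c > (0:ℝ), ∀ r > (0:ℝ), ∀ r' > (0:ℝ), ∀ x > (0:ℝ),
      S (c * r) (c * x) - S (c * r') (c * x) = S r x - S r' x := by
  set g : ℝ → ℝ := fun t ↦
    (if 1 < t then (1:ℝ) else 0) * (1 - 2 * τ) * (log t + 1 - t) + (1 - τ) * (t - 1)
  have hS_ratio : ∀ r > (0:ℝ), ∀ x > (0:ℝ), S r x = g (x / r) + (1 - τ) * log r := by
    intro r hr x hx
    simp only [g, hS r hr x hx, one_lt_div hr]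
    ring
  intro c hc r hr r' hr' x hx
  exact sub_eq_of_ratio_add_mul_log g (1 - τ) hS_ratio hc hr hr' hx

theorem expectile_log_score_zero_homogeneous_differences
    (τ : ℝ) (hτ : τ ∈ Set.Ioo (0:ℝ) 1)
    (S : ℝ → ℝ → ℝ)
    (hS : ∀ r > (0:ℝ), ∀ x > (0:ℝ),
      S r x = (if r < x then (1:ℝ) else 0) * (1 - 2*τ) * (Real.log (x / r) + 1 - x / r)
        + (1 - τ) * (Real.log r - 1 + x / r)) :
    ∀ c > (0:ℝ), ∀ r > (0:ℝ), ∀ r' > (0:ℝ), ∀ x > (0:ℝ),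
      S (c * r) (c * x) - S (c * r') (c * x) = S r x - S r' x :=
  expectile_log_score_zero_homogeneous_differences_general τ S hS
end

section
/- Let ν ∈ (0,1) and define S(r₁, r₂, x) = 1{x > r₁}·(x - r₁)/r₂ + (1-ν)·(r₁/r₂ - 1 + log r₂) for r₁ ∈ ℝ, r₂ > 0, x ∈ ℝ. Then the score differences are positively homogeneous of degree 0: S(c·r₁, c·r₂, c·x) - S(c·r₁', c·r₂', c·x) = S(r₁, r₂, x) - S(r₁', r₂', x) for all c > 0, r₁, r₁' ∈ ℝ, r₂, r₂' > 0, x ∈ ℝ. -/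
/-!
Scaling all arguments by `c > 0` leaves the excess term `1{x > r₁} (x - r₁) / r₂` and the ratio
`r₁ / r₂` unchanged, while `log (c r₂) = log c + log r₂`. So the score shifts by the constant
`(1 - ν) log c`, independent of the forecast, which cancels in any difference of scores.
-/

open Real

noncomputable def varEsLogScore (ν r₁ r₂ x : ℝ) : ℝ :=
  (if r₁ < x then (1:ℝ) else 0) * (x - r₁) / r₂ + (1 - ν) * (r₁ / r₂ - 1 + log r₂)

lemma varEsLogScore_mul (ν : ℝ) {c : ℝ} (hc : 0 < c) (r₁ : ℝ) {r₂ : ℝ} (hr₂ : 0 < r₂)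
    (x : ℝ) :
    varEsLogScore ν (c * r₁) (c * r₂) (c * x) = varEsLogScore ν r₁ r₂ x + (1 - ν) * log c := by
  have hexcess : (c * x - c * r₁) / (c * r₂) = (x - r₁) / r₂ := by
    rw [← mul_sub, mul_div_mul_left _ _ hc.ne']
  have hratio : c * r₁ / (c * r₂) = r₁ / r₂ := mul_div_mul_left _ _ hc.ne'
  simp only [varEsLogScore, mul_lt_mul_iff_right₀ hc, mul_div_assoc, hexcess, hratio,
    log_mul hc.ne' hr₂.ne']
  ring

theorem var_es_log_score_zero_homogeneous_differences_general
    (ν : ℝ)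
    (S : ℝ → ℝ → ℝ → ℝ)
    (hS : ∀ (r₁ : ℝ), ∀ r₂ > (0:ℝ), ∀ x : ℝ,
      S r₁ r₂ x = (if r₁ < x then (1:ℝ) else 0) * (x - r₁) / r₂
        + (1 - ν) * (r₁ / r₂ - 1 + Real.log r₂)) :
    ∀ c > (0:ℝ), ∀ (r₁ r₁' : ℝ), ∀ r₂ > (0:ℝ), ∀ r₂' > (0:ℝ), ∀ x : ℝ,
      S (c * r₁) (c * r₂) (c * x) - S (c * r₁') (c * r₂') (c * x)
        = S r₁ r₂ x - S r₁' r₂' x := by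
  intro c hc r₁ r₁' r₂ hr₂ r₂' hr₂' x
  have hS' : ∀ r₁, ∀ r₂ > (0:ℝ), ∀ x, S r₁ r₂ x = varEsLogScore ν r₁ r₂ x := hS
  rw [hS' _ _ (mul_pos hc hr₂), hS' _ _ (mul_pos hc hr₂'), hS' _ _ hr₂, hS' _ _ hr₂',
    varEsLogScore_mul ν hc r₁ hr₂, varEsLogScore_mul ν hc r₁' hr₂']
  ring

theorem var_es_log_score_zero_homogeneous_differences
    (ν : ℝ) (hν : ν ∈ Set.Ioo (0:ℝ) 1)
    (S : ℝ → ℝ → ℝ → ℝ)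
    (hS : ∀ (r₁ : ℝ), ∀ r₂ > (0:ℝ), ∀ x : ℝ,
      S r₁ r₂ x = (if r₁ < x then (1:ℝ) else 0) * (x - r₁) / r₂
        + (1 - ν) * (r₁ / r₂ - 1 + Real.log r₂)) :
    ∀ c > (0:ℝ), ∀ (r₁ r₁' : ℝ), ∀ r₂ > (0:ℝ), ∀ r₂' > (0:ℝ), ∀ x : ℝ,
      S (c * r₁) (c * r₂) (c * x) - S (c * r₁') (c * r₂') (c * x)
        = S r₁ r₂ x - S r₁' r₂' x :=
  var_es_log_score_zero_homogeneous_differences_general ν S hS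
end
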